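/- arXiv:2507.22655 — 8 statements merged into one kernel-verified Lean document; each statement's English description precedes it below -/
import Mathlib

section
/- A voting rule φ is a weighted majority rule with nonnegative weight vector w ≥ 0 (w ≠ 0) if and only if for every probability distribution p on {-1,1}^n, the weighted average of responsiveness satisfies (∑ᵢ wᵢ rᵢ(φ,p)) / (∑ᵢ wᵢ) ≥ 1/2. -/
open Finset

/-- The real value of a ±1 vote encoded as a `Bool` (`true ↦ 1`, `false ↦ -1`). -/
def sg (b : Bool) : ℝ := if b then 1 else -1

/-- Responsiveness of individual `i` under rule `φ` and distribution `p`. -/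
def resp {n : ℕ} (φ : (Fin n → Bool) → Bool) (p : (Fin n → Bool) → ℝ) (i : Fin n) : ℝ :=
  ∑ x : Fin n → Bool, if φ x = x i then p x else 0

/-- `p` is a probability distribution on profiles. -/
def IsProb {n : ℕ} (p : (Fin n → Bool) → ℝ) : Prop :=
  (∀ x, 0 ≤ p x) ∧ ∑ x : Fin n → Bool, p x = 1

lemma sg_two (a b : Bool) : (if a = b then (2:ℝ) else 0) = 1 + sg a * sg b := by
  cases a <;> cases b <;> simp [sg] <;> norm_num

lemma key {n : ℕ} (φ : (Fin n → Bool) → Bool) (w : Fin n → ℝ) (x : Fin n → Bool) :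
    2 * ∑ i, w i * (if φ x = x i then (1:ℝ) else 0)
      = (∑ i, w i) + sg (φ x) * ∑ i, w i * sg (x i) := by
  rw [Finset.mul_sum, Finset.mul_sum, ← Finset.sum_add_distrib]
  congr 1; funext i
  have := sg_two (φ x) (x i)
  by_cases h : φ x = x i <;> simp [h] at this ⊢ <;> linear_combination w i * this

/-- `φ` is a WMR with nonnegative weights `w ≥ 0`, `w ≠ 0`, iff the
`w`-weighted average responsiveness is at least one-half under every distribution. -/
theorem stmt_4 (n : ℕ) (φ : (Fin n → Bool) → Bool) (w : Fin n → ℝ)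
    (hw : ∀ i, 0 ≤ w i) (hw0 : w ≠ 0) :
    (∀ x, 0 ≤ sg (φ x) * ∑ i, w i * sg (x i)) ↔
    (∀ p, IsProb p → (1 : ℝ) / 2 ≤ (∑ i, w i * resp φ p i) / (∑ i, w i)) := by
  have hS : 0 < ∑ i, w i := by
    obtain ⟨i, hi⟩ := Function.ne_iff.mp hw0
    exact Finset.sum_pos' (fun j _ => hw j) ⟨i, Finset.mem_univ i, lt_of_le_of_ne (hw i) (Ne.symm hi)⟩
  constructor
  · intro h p hp
    rw [le_div_iff₀ hS]
    have hT : ∑ i, w i * resp φ p i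
        = ∑ x : Fin n → Bool, p x * ((∑ i, w i) + sg (φ x) * ∑ i, w i * sg (x i)) / 2 := by
      simp only [resp, Finset.mul_sum]
      rw [Finset.sum_comm]
      congr 1; funext x
      have := key φ w x
      have h2 : ∑ i, w i * (if φ x = x i then p x else 0)
          = p x * ∑ i, w i * (if φ x = x i then (1:ℝ) else 0) := by
        rw [Finset.mul_sum]; congr 1; funext i; by_cases h : φ x = x i <;> simp [h] <;> ring
      rw [h2, ← Finset.mul_sum]
      linear_combination p x / 2 * this
    rw [hT]
    calc (1:ℝ)/2 * ∑ i, w i = ∑ x : Fin n → Bool, p x * (∑ i, w i) / 2 := by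
            rw [← Finset.sum_div, ← Finset.sum_mul, hp.2]; ring
      _ ≤ ∑ x : Fin n → Bool, p x * ((∑ i, w i) + sg (φ x) * ∑ i, w i * sg (x i)) / 2 := by
            refine Finset.sum_le_sum fun x _ => ?_
            nlinarith [mul_nonneg (hp.1 x) (h x)]
  · intro h x0
    set p : (Fin n → Bool) → ℝ := fun x => if x = x0 then 1 else 0 with hpdef
    have hp : IsProb p := by
      constructor
      · intro x; by_cases h : x = x0 <;> simp [hpdef, h]
      · simp [hpdef]
    have hr : ∀ i, resp φ p i = if φ x0 = x0 i then (1:ℝ) else 0 := by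
      intro i
      rw [resp]
      rw [Finset.sum_eq_single x0]
      · simp [hpdef]
      · intro b _ hb; simp [hpdef, hb]
      · intro hb; exact absurd (Finset.mem_univ x0) hb
    have := h p hp
    rw [le_div_iff₀ hS] at this
    simp only [hr] at this
    have hk := key φ w x0
    nlinarith
end

section
/- A voting rule φ is a weighted majority rule with nonnegative weights w ≥ 0 (w ≠ 0) admitting no ties if and only if for every probability distribution p on {-1,1}^n, (∑ᵢ wᵢ rᵢ(φ,p)) / (∑ᵢ wᵢ) > 1/2. -/
open Finset

lemma sg_mul (a b : Bool) : sg a * sg b = if a = b then 1 else -1 := by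
  cases a <;> cases b <;> simp [sg] <;> norm_num

/-- `φ` is a WMR with nonnegative weights `w ≥ 0`, `w ≠ 0`, admitting no
ties iff the `w`-weighted average responsiveness strictly exceeds one-half under every
distribution. -/
theorem stmt_5 (n : ℕ) (φ : (Fin n → Bool) → Bool) (w : Fin n → ℝ)
    (hw : ∀ i, 0 ≤ w i) (hw0 : w ≠ 0) :
    (∀ x, 0 < sg (φ x) * ∑ i, w i * sg (x i)) ↔
    (∀ p, IsProb p → (1 : ℝ) / 2 < (∑ i, w i * resp φ p i) / (∑ i, w i)) := by
  set W := ∑ i, w i with hW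
  have hWpos : 0 < W := by
    obtain ⟨i, hi⟩ := Function.ne_iff.mp hw0
    exact Finset.sum_pos' (fun j _ => hw j)
      ⟨i, Finset.mem_univ i, lt_of_le_of_ne (hw i) (Ne.symm hi)⟩
  set S : (Fin n → Bool) → ℝ := fun x => sg (φ x) * ∑ i, w i * sg (x i) with hS
  have key : ∀ (p : (Fin n → Bool) → ℝ),
      ∑ i, w i * resp φ p i = ∑ x : Fin n → Bool, p x * (W + S x) / 2 := by
    intro p
    unfold resp
    simp only [Finset.mul_sum]
    rw [Finset.sum_comm]
    · refine Finset.sum_congr rfl fun x _ => ?_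
      have : ∀ i : Fin n, w i * (if φ x = x i then p x else 0)
          = p x * (w i + w i * (sg (φ x) * sg (x i))) / 2 := by
        intro i
        rcases eq_or_ne (φ x) (x i) with h | h
        · simp [h, sg_mul]; ring
        · simp [h, sg_mul]
      rw [Finset.sum_congr rfl fun i _ => this i]
      simp only [hS, Finset.mul_sum, mul_add, Finset.sum_div, Finset.sum_add_distrib,
        ← Finset.sum_div]
      congr 1
      congr 1
      · exact (Finset.mul_sum _ _ _).symm
      · exact Finset.sum_congr rfl fun i _ => by ring
  constructor
  · intro h p hp
    have hsum : 0 < ∑ x : Fin n → Bool, p x * S x := by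
      refine Finset.sum_pos' (fun x _ => mul_nonneg (hp.1 x) (le_of_lt (h x))) ?_
      obtain ⟨x, _, hx⟩ := Finset.exists_lt_of_sum_lt (f := fun _ => (0:ℝ)) (g := p)
        (by rw [hp.2]; simp)
      exact ⟨x, Finset.mem_univ x, mul_pos hx (h x)⟩
    rw [key]
    have : ∑ x : Fin n → Bool, p x * (W + S x) / 2
        = (W + ∑ x : Fin n → Bool, p x * S x) / 2 := by
      rw [← Finset.sum_div]
      congr 1
      simp only [mul_add, Finset.sum_add_distrib, ← Finset.sum_mul, hp.2, one_mul]
    rw [this]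
    rw [div_div]
    rw [lt_div_iff₀ (by positivity)]
    nlinarith
  · intro h x
    set p : (Fin n → Bool) → ℝ := fun y => if y = x then 1 else 0 with hp
    have hprob : IsProb p := by
      constructor
      · intro y; by_cases hy : y = x <;> simp [hp, hy]
      · simp [hp]
    have := h p hprob
    rw [key] at this
    have hsum : ∑ y : Fin n → Bool, p y * (W + S y) / 2 = (W + S x) / 2 := by
      rw [Finset.sum_eq_single x]
      · simp [hp]
      · intro y _ hy; simp [hp, hy]
      · simp
    rw [hsum, div_div, lt_div_iff₀ (by positivity), div_mul_eq_mul_div] at this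
    show 0 < S x
    nlinarith
end

section
/- Let P be the convex hull of finitely many probability distributions p₁,…,p_m on {-1,1}^n. A voting rule φ is P-robust (for each p ∈ P there is some i with rᵢ(φ,p) > 1/2) if and only if there exists a nonnegative weight vector w ∈ ℝ₊^n, w ≠ 0, such that (∑ᵢ wᵢ rᵢ(φ,pⱼ))/(∑ᵢ wᵢ) > 1/2 for every j = 1,…,m. -/
open Finset

/-!
Since `rᵢ(φ, ·)` is linear in the distribution, both conditions are statements about the matrix
`M j i = rᵢ(φ, pⱼ) - 1/2`: robustness says that every convex combination `λᵀM` of its rows has a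
positive entry, and the weight condition says that `M w > 0` for some `w ≥ 0` (such a `w` is
automatically nonzero, as there is at least one row). These are the two sides of Ville's theorem of
the alternative, whose nontrivial direction is the separation of the compact convex set
`{-λᵀM | λ ∈ Δ}` from the nonnegative orthant by a functional that is nonnegative on the orthant.
-/

open Matrix

section Ville

variable {κ ι : Type*} [Fintype κ] [Fintype ι] {M : Matrix κ ι ℝ}

theorem StrongDual.apply_eq_dotProduct [DecidableEq ι] (f : StrongDual ℝ (ι → ℝ)) (y : ι → ℝ) :
    f y = y ⬝ᵥ fun i => f (Pi.single i 1) := by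
  conv_lhs => rw [← Finset.univ_sum_single y]
  simp only [map_sum, dotProduct]
  refine sum_congr rfl fun i _ => ?_
  rw [← smul_eq_mul, ← map_smul, ← Pi.single_smul', smul_eq_mul, mul_one]

theorem Matrix.exists_pos_vecMul_of_mulVec_pos {w : ι → ℝ} (hw : 0 ≤ w)
    (hMw : ∀ j, 0 < (M *ᵥ w) j) {lam : κ → ℝ} (hlam : lam ∈ stdSimplex ℝ κ) :
    ∃ i, 0 < (lam ᵥ* M) i := by
  obtain ⟨j, hj⟩ : ∃ j, 0 < lam j := by
    by_contra! h
    have := hlam.2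
    rw [sum_eq_zero fun j _ => le_antisymm (h j) (hlam.1 j)] at this
    exact zero_ne_one this
  have hpos : 0 < lam ⬝ᵥ (M *ᵥ w) :=
    sum_pos' (fun j _ => mul_nonneg (hlam.1 j) (hMw j).le) ⟨j, mem_univ j, mul_pos hj (hMw j)⟩
  rw [dotProduct_mulVec] at hpos
  by_contra! h
  exact hpos.not_ge (sum_nonpos fun i _ => mul_nonpos_of_nonpos_of_nonneg (h i) (hw i))

theorem Matrix.exists_nonneg_mulVec_pos_of_forall_stdSimplex
    (hM : ∀ lam ∈ stdSimplex ℝ κ, ∃ i, 0 < (lam ᵥ* M) i) :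
    ∃ w, 0 ≤ w ∧ ∀ j, 0 < (M *ᵥ w) j := by
  classical
  set K := (-M.vecMulLinear) '' stdSimplex ℝ κ
  have hKC : Disjoint K (ProperCone.positive ℝ (ι → ℝ)) := by
    rw [Set.disjoint_left]
    rintro _ ⟨lam, hlam, rfl⟩ hnonneg
    obtain ⟨i, hi⟩ := hM lam hlam
    have := hnonneg i
    simp only [LinearMap.neg_apply, vecMulLinear_apply, Pi.zero_apply, Pi.neg_apply,
      Left.nonneg_neg_iff] at this
    linarith
  obtain ⟨f, hfC, hfK⟩ := ProperCone.hyperplane_separation _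
    ((convex_stdSimplex ℝ κ).linear_image _)
    ((isCompact_stdSimplex ℝ κ).image (LinearMap.continuous_of_finiteDimensional _)) hKC
  refine ⟨fun i => f (Pi.single i 1), fun i => hfC _ (by simp), fun j => ?_⟩
  change 0 < M.row j ⬝ᵥ _
  have := hfK _ ⟨Pi.single j 1, single_mem_stdSimplex ℝ j, rfl⟩
  rw [StrongDual.apply_eq_dotProduct] at this
  simpa [single_one_vecMul, neg_dotProduct] using this

theorem Matrix.exists_nonneg_mulVec_pos_iff :
    (∃ w, 0 ≤ w ∧ ∀ j, 0 < (M *ᵥ w) j) ↔ ∀ lam ∈ stdSimplex ℝ κ, ∃ i, 0 < (lam ᵥ* M) i :=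
  ⟨fun ⟨_, hw, hMw⟩ _ hlam => exists_pos_vecMul_of_mulVec_pos hw hMw hlam,
    exists_nonneg_mulVec_pos_of_forall_stdSimplex⟩

end Ville

theorem Matrix.lt_vecMul_iff_of_mem_stdSimplex {κ ι : Type*} [Fintype κ] (A : Matrix κ ι ℝ) (c : ℝ) {lam : κ → ℝ}
    (hlam : lam ∈ stdSimplex ℝ κ) (i : ι) :
    c < (lam ᵥ* A) i ↔ 0 < (lam ᵥ* of fun j i => A j i - c) i := by
  simp only [vecMul, dotProduct, of_apply, mul_sub, sum_sub_distrib, ← sum_mul, hlam.2, one_mul,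
    sub_pos]

theorem Matrix.lt_mulVec_div_sum_iff {κ ι : Type*} [Fintype ι] (A : Matrix κ ι ℝ) (c : ℝ) {w : ι → ℝ} (hw : 0 ≤ w)
    (hne : w ≠ 0) (j : κ) :
    c < (A *ᵥ w) j / ∑ i, w i ↔ 0 < ((of fun j i => A j i - c) *ᵥ w) j := by
  have hsum : 0 < ∑ i, w i := (Fintype.sum_pos_iff_of_nonneg hw).2 (hw.lt_of_ne' hne)
  rw [lt_div_iff₀ hsum]
  simp only [mulVec, dotProduct, of_apply, sub_mul, sum_sub_distrib, ← mul_sum, sub_pos]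

theorem resp_sum_mul {n m : ℕ} (φ : (Fin n → Bool) → Bool) (ps : Fin m → (Fin n → Bool) → ℝ)
    (lam : Fin m → ℝ) (i : Fin n) :
    resp φ (fun x => ∑ j, lam j * ps j x) i = ∑ j, lam j * resp φ (ps j) i := by
  simp only [resp, mul_sum]
  rw [sum_comm]
  refine sum_congr rfl fun x _ => ?_
  split_ifs <;> simp

theorem stmt_7_general (n m : ℕ) (hm : 0 < m) (φ : (Fin n → Bool) → Bool)
    (ps : Fin m → (Fin n → Bool) → ℝ) :
    (∀ lam : Fin m → ℝ, (∀ j, 0 ≤ lam j) → (∑ j, lam j) = 1 →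
        ∃ i, (1 : ℝ) / 2 < resp φ (fun x => ∑ j, lam j * ps j x) i) ↔
    (∃ w : Fin n → ℝ, (∀ i, 0 ≤ w i) ∧ w ≠ 0 ∧
        ∀ j, (1 : ℝ) / 2 < (∑ i, w i * resp φ (ps j) i) / (∑ i, w i)) := by
  set A : Matrix (Fin m) (Fin n) ℝ := of fun j i => resp φ (ps j) i
  have mixture_eq : ∀ lam i, resp φ (fun x => ∑ j, lam j * ps j x) i = (lam ᵥ* A) i :=
    fun lam i => by simp [A, vecMul, dotProduct, resp_sum_mul]
  have weighted_eq : ∀ w j, ∑ i, w i * resp φ (ps j) i = (A *ᵥ w) j :=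
    fun w j => by simp [A, mulVec, dotProduct, mul_comm]
  simp only [mixture_eq, weighted_eq]
  trans ∀ lam ∈ stdSimplex ℝ (Fin m), ∃ i, 0 < (lam ᵥ* of fun j i => A j i - 1 / 2) i
  · refine forall_congr' fun lam => ⟨fun h hlam => ?_, fun h h0 h1 => ?_⟩
    · exact (h hlam.1 hlam.2).imp fun i => (lt_vecMul_iff_of_mem_stdSimplex A _ hlam i).1
    · exact (h ⟨h0, h1⟩).imp fun i => (lt_vecMul_iff_of_mem_stdSimplex A _ ⟨h0, h1⟩ i).2
  rw [← exists_nonneg_mulVec_pos_iff]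
  constructor
  · rintro ⟨w, hw, hMw⟩
    have hne : w ≠ 0 := by
      rintro rfl
      simpa using hMw ⟨0, hm⟩
    exact ⟨w, hw, hne, fun j => (lt_mulVec_div_sum_iff A _ hw hne j).2 (hMw j)⟩
  · rintro ⟨w, hw, hne, h⟩
    exact ⟨w, hw, fun j => (lt_mulVec_div_sum_iff A _ hw hne j).1 (h j)⟩

/-- for `P` the convex hull of `p₁,…,p_m`, `φ` is `P`-robust iff there is a
nonnegative nonzero weight vector whose weighted average responsiveness strictly exceeds
one-half at every `pⱼ`. -/
theorem stmt_7 (n m : ℕ) (hm : 0 < m) (φ : (Fin n → Bool) → Bool)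
    (ps : Fin m → (Fin n → Bool) → ℝ) (hps : ∀ j, IsProb (ps j)) :
    (∀ lam : Fin m → ℝ, (∀ j, 0 ≤ lam j) → (∑ j, lam j) = 1 →
        ∃ i, (1 : ℝ) / 2 < resp φ (fun x => ∑ j, lam j * ps j x) i) ↔
    (∃ w : Fin n → ℝ, (∀ i, 0 ≤ w i) ∧ w ≠ 0 ∧
        ∀ j, (1 : ℝ) / 2 < (∑ i, w i * resp φ (ps j) i) / (∑ i, w i)) :=
  stmt_7_general n m hm φ ps
end

section
/- A deterministic voting rule φ is weakly robust (for every probability distribution p on {-1,1}^n, there exists i with rᵢ(φ,p) ≥ 1/2) if and only if φ is a weighted majority rule with nonnegative weights, i.e., there exists w ∈ ℝ₊^n, w ≠ 0, with φ(x)·∑ᵢ wᵢxᵢ ≥ 0 for all x. -/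
open Finset

lemma if_eq_half (a b : Bool) (c : ℝ) :
    (if a = b then c else 0) = 1/2 * c + 1/2 * (c * (sg a * sg b)) := by
  cases a <;> cases b <;> simp [sg] <;> ring

lemma resp_eq {n : ℕ} (φ : (Fin n → Bool) → Bool) (p : (Fin n → Bool) → ℝ)
    (hp : ∑ x : Fin n → Bool, p x = 1) (i : Fin n) :
    resp φ p i = 1/2 + 1/2 * ∑ x : Fin n → Bool, p x * (sg (φ x) * sg (x i)) := by
  unfold resp
  calc ∑ x : Fin n → Bool, (if φ x = x i then p x else 0)
      = ∑ x : Fin n → Bool, (1/2 * p x + 1/2 * (p x * (sg (φ x) * sg (x i)))) :=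
        Finset.sum_congr rfl fun x _ => if_eq_half _ _ _
    _ = 1/2 * ∑ x : Fin n → Bool, p x
        + 1/2 * ∑ x : Fin n → Bool, p x * (sg (φ x) * sg (x i)) := by
        rw [Finset.sum_add_distrib, ← Finset.mul_sum, ← Finset.mul_sum]
    _ = _ := by rw [hp]; ring

lemma combo_neg {a b u v : ℝ} (ha : 0 ≤ a) (hb : 0 ≤ b) (hab : a + b = 1)
    (hu : u < 0) (hv : v < 0) : a * u + b * v < 0 := by
  have hm : max u v < 0 := max_lt hu hv
  calc a * u + b * v ≤ a * max u v + b * max u v :=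
        add_le_add (mul_le_mul_of_nonneg_left (le_max_left _ _) ha)
          (mul_le_mul_of_nonneg_left (le_max_right _ _) hb)
    _ = max u v := by rw [← add_mul, hab, one_mul]
    _ < 0 := hm

/-- `φ` is weakly robust iff it is a WMR with nonnegative weights. -/
theorem stmt_10 (n : ℕ) (φ : (Fin n → Bool) → Bool) :
    (∀ p, IsProb p → ∃ i, (1 : ℝ) / 2 ≤ resp φ p i) ↔
    (∃ w : Fin n → ℝ, (∀ i, 0 ≤ w i) ∧ w ≠ 0 ∧
        ∀ x, 0 ≤ sg (φ x) * ∑ i, w i * sg (x i)) := by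
  constructor
  · -- hard direction: robustness implies WMR
    intro hrob
    by_contra hnR
    -- the set of average correlation vectors
    set T : Set (Fin n → ℝ) :=
      {y | ∃ q, IsProb q ∧ y = fun i => ∑ x : Fin n → Bool, q x * (sg (φ x) * sg (x i))} with hT
    set O : Set (Fin n → ℝ) := {y | ∀ i, y i < 0} with hO
    have hOopen : IsOpen O := by
      have : O = ⋂ i, (fun y : Fin n → ℝ => y i) ⁻¹' Set.Iio 0 := by
        ext y; simp [hO, Set.mem_iInter]
      rw [this]
      exact isOpen_iInter_of_finite fun i => (isOpen_Iio).preimage (continuous_apply i)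
    have hOconv : Convex ℝ O := by
      intro y hy z hz a b ha hb hab
      simp only [hO, Set.mem_setOf_eq] at hy hz ⊢
      intro i
      simp only [Pi.add_apply, Pi.smul_apply, smul_eq_mul]
      exact combo_neg ha hb hab (hy i) (hz i)
    have hTconv : Convex ℝ T := by
      rintro y ⟨q1, hq1, rfl⟩ z ⟨q2, hq2, rfl⟩ a b ha hb hab
      refine ⟨fun x => a * q1 x + b * q2 x, ⟨fun x => add_nonneg (mul_nonneg ha (hq1.1 x))
        (mul_nonneg hb (hq2.1 x)), ?_⟩, ?_⟩
      · rw [Finset.sum_add_distrib, ← Finset.mul_sum, ← Finset.mul_sum, hq1.2, hq2.2]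
        simpa using hab
      · funext i
        simp only [Pi.add_apply, Pi.smul_apply, smul_eq_mul, Finset.mul_sum,
          ← Finset.sum_add_distrib]
        exact Finset.sum_congr rfl fun x _ => by ring
    -- point masses lie in T
    have hpm : ∀ x₀ : Fin n → Bool,
        (fun i => sg (φ x₀) * sg (x₀ i)) ∈ T := by
      intro x₀
      refine ⟨fun x => if x = x₀ then 1 else 0,
        ⟨fun x => by by_cases h : x = x₀ <;> simp [h], by simp⟩, ?_⟩
      funext i
      simp [ite_mul]
    by_cases hdisj : Disjoint O T
    · -- separation yields nonnegative weights, contradicting hnR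
      obtain ⟨f, u, hfO, hfT⟩ := geometric_hahn_banach_open hOconv hOopen hTconv hdisj
      set w : Fin n → ℝ := fun i => f (Pi.single i 1) with hw
      have hfy : ∀ y : Fin n → ℝ, f y = ∑ i, y i * w i := by
        intro y
        conv_lhs => rw [← Finset.univ_sum_single y]
        rw [map_sum]
        refine Finset.sum_congr rfl fun i _ => ?_
        have : Pi.single i (y i) = y i • (Pi.single i (1:ℝ) : Fin n → ℝ) := by
          rw [← Pi.single_smul, smul_eq_mul, mul_one]
        rw [this, map_smul, smul_eq_mul]
      have hoc : (fun _ => (-1:ℝ)) ∈ O := fun i => by norm_num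
      have hcu : f (fun _ => (-1:ℝ)) < u := hfO _ hoc
      -- u is nonnegative
      have hu0 : 0 ≤ u := by
        by_contra hu
        push_neg at hu
        set c := f (fun _ => (-1:ℝ)) with hc
        have hcneg : c < 0 := lt_trans hcu hu
        have hlam : 0 < u / (2 * c) := div_pos_of_neg_of_neg hu (by linarith)
        have hmem : ((u / (2 * c)) • fun _ => (-1:ℝ)) ∈ O := by
          intro i
          simp only [Pi.smul_apply, smul_eq_mul]
          nlinarith
        have h2 := hfO _ hmem
        rw [map_smul, smul_eq_mul, ← hc] at h2
        have hcne : c ≠ 0 := ne_of_lt hcneg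
        have : u / (2 * c) * c = u / 2 := by
          field_simp
        rw [this] at h2
        linarith
      -- weights are nonnegative
      have hw0 : ∀ i, 0 ≤ w i := by
        intro i
        by_contra hwi
        push_neg at hwi
        set c := f (fun _ => (-1:ℝ)) with hc
        set lam := (u - c + 1) / (-w i) with hlamdef
        have hlam : 0 < lam := div_pos (by linarith) (by linarith)
        have hmem : ((fun _ => (-1:ℝ)) - lam • (Pi.single i (1:ℝ) : Fin n → ℝ)) ∈ O := by
          intro j
          simp only [Pi.sub_apply, Pi.smul_apply, smul_eq_mul, Pi.single_apply]
          by_cases h : j = i <;> simp [h] <;> linarith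
        have h2 := hfO _ hmem
        rw [map_sub, map_smul, smul_eq_mul, ← hc] at h2
        have hne : w i ≠ 0 := ne_of_lt hwi
        have hlw : lam * w i = -(u - c + 1) := by
          rw [hlamdef, div_mul_eq_mul_div, div_neg, mul_comm, mul_div_assoc,
            mul_comm (w i), div_mul_cancel₀ _ hne]
        rw [hlw] at h2
        linarith
      -- weights are not all zero
      have hwne : w ≠ 0 := by
        intro h0
        have hy0 := hfT _ (hpm fun _ => false)
        rw [hfy] at hy0
        simp [h0] at hy0
        rw [hfy] at hcu
        simp [h0] at hcu
        linarith
      refine hnR ⟨w, hw0, hwne, fun x => ?_⟩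
      have := le_trans hu0 (hfT _ (hpm x))
      rw [hfy] at this
      calc (0:ℝ) ≤ ∑ i, sg (φ x) * sg (x i) * w i := this
        _ = sg (φ x) * ∑ i, w i * sg (x i) := by
            rw [Finset.mul_sum]
            exact Finset.sum_congr rfl fun i _ => by ring
    · -- T meets O: a distribution making every responsiveness < 1/2
      obtain ⟨y, hyO, hyT⟩ := Set.not_disjoint_iff.mp hdisj
      obtain ⟨q, hq, rfl⟩ := hyT
      obtain ⟨i, hi⟩ := hrob q hq
      have := resp_eq φ q hq.2 i
      have hyi := hyO i
      simp only [hO, Set.mem_setOf_eq] at hyi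
      rw [this] at hi
      linarith
  · -- easy direction: WMR implies robustness
    rintro ⟨w, hw0, hwne, hwx⟩ p hp
    by_contra h
    push_neg at h
    obtain ⟨i₀, hi₀⟩ : ∃ i, 0 < w i := by
      by_contra hh
      push_neg at hh
      exact hwne (funext fun i => le_antisymm (hh i) (hw0 i))
    have key : (0:ℝ) ≤ ∑ i, w i * ∑ x : Fin n → Bool, p x * (sg (φ x) * sg (x i)) := by
      have : ∑ i, w i * ∑ x : Fin n → Bool, p x * (sg (φ x) * sg (x i))
          = ∑ x : Fin n → Bool, p x * (sg (φ x) * ∑ i, w i * sg (x i)) := by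
        simp_rw [Finset.mul_sum]
        rw [Finset.sum_comm]
        exact Finset.sum_congr rfl fun x _ => Finset.sum_congr rfl fun i _ => by ring
      rw [this]
      exact Finset.sum_nonneg fun x _ => mul_nonneg (hp.1 x) (hwx x)
    have hneg : ∀ i : Fin n, ∑ x : Fin n → Bool, p x * (sg (φ x) * sg (x i)) < 0 := by
      intro i
      have := resp_eq φ p hp.2 i
      have hi := h i
      rw [this] at hi
      linarith
    have : ∑ i, w i * ∑ x : Fin n → Bool, p x * (sg (φ x) * sg (x i)) < ∑ _i : Fin n, (0:ℝ) := by
      refine Finset.sum_lt_sum (fun i _ => mul_nonpos_of_nonneg_of_nonpos (hw0 i) (hneg i).le)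
        ⟨i₀, Finset.mem_univ i₀, mul_neg_of_pos_of_neg hi₀ (hneg i₀)⟩
    simp at this
    linarith
end

section
/- Let P be the convex hull of a finite set of distributions {pⱼ}_{j∈M} on {-1,1}^n that is permutation invariant (p ∈ P implies p^π ∈ P for every permutation π). An anonymous voting rule φ is P-robust if and only if the arithmetic mean of responsiveness (1/n)∑ᵢ rᵢ(φ,pⱼ) > 1/2 for every j ∈ M. -/
open Finset

/-- The convex hull of finitely many distributions `ps`. -/
def hullOf {n m : ℕ} (ps : Fin m → (Fin n → Bool) → ℝ) : Set ((Fin n → Bool) → ℝ) :=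
  {p | ∃ lam : Fin m → ℝ, (∀ j, 0 ≤ lam j) ∧ (∑ j, lam j) = 1 ∧
        p = fun x => ∑ j, lam j * ps j x}

/-- `resp` is linear in the distribution argument. -/
lemma resp_lin {n : ℕ} {ι : Type*} [Fintype ι] (φ : (Fin n → Bool) → Bool)
    (a : ι → ℝ) (f : ι → (Fin n → Bool) → ℝ) (i : Fin n) :
    resp φ (fun x => ∑ c, a c * f c x) i = ∑ c, a c * resp φ (f c) i := by
  unfold resp
  calc ∑ x : Fin n → Bool, (if φ x = x i then ∑ c, a c * f c x else 0)
      = ∑ x : Fin n → Bool, ∑ c, (if φ x = x i then a c * f c x else 0) := by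
        refine Finset.sum_congr rfl fun x _ => ?_
        split <;> simp
    _ = ∑ c, ∑ x : Fin n → Bool, (if φ x = x i then a c * f c x else 0) :=
        Finset.sum_comm
    _ = ∑ c, a c * ∑ x : Fin n → Bool, (if φ x = x i then f c x else 0) := by
        refine Finset.sum_congr rfl fun c _ => ?_
        rw [Finset.mul_sum]
        refine Finset.sum_congr rfl fun x _ => ?_
        rw [mul_ite, mul_zero]

/-- Responsiveness under a permuted distribution. -/
lemma resp_perm {n : ℕ} (φ : (Fin n → Bool) → Bool)
    (hanon : ∀ (x : Fin n → Bool) (π : Equiv.Perm (Fin n)), φ (fun i => x (π i)) = φ x)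
    (p : (Fin n → Bool) → ℝ) (π : Equiv.Perm (Fin n)) (i : Fin n) :
    resp φ (fun x => p (fun j => x (π j))) i = resp φ p (π⁻¹ i) := by
  unfold resp
  let e₀ : (Fin n → Bool) ≃ (Fin n → Bool) :=
    { toFun := fun y k => y (π.symm k)
      invFun := fun x k => x (π k)
      left_inv := fun y => by funext k; simp
      right_inv := fun x => by funext k; simp }
  refine (Fintype.sum_equiv e₀
    (fun y => if φ y = y (π⁻¹ i) then p y else 0)
    (fun x => if φ x = x i then p (fun j => x (π j)) else 0) fun y => ?_).symm
  show (if φ y = y (π⁻¹ i) then p y else 0)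
      = if φ (fun k => y (π.symm k)) = y (π.symm i)
          then p (fun j => y (π.symm (π j))) else 0
  have hphi : φ (fun k => y (π.symm k)) = φ y := hanon y π⁻¹
  have hcomp : (fun j => y (π.symm (π j))) = y := by funext j; simp
  rw [hphi, hcomp]
  rfl

lemma mem_hull {n m : ℕ} (ps : Fin m → (Fin n → Bool) → ℝ) (j : Fin m) :
    ps j ∈ hullOf ps := by
  refine ⟨fun k => if k = j then 1 else 0, fun k => ?_, ?_, ?_⟩
  · dsimp only; split <;> norm_num
  · simp
  · funext x
    simp [ite_mul]

/-- for a permutation-invariant convex hull `P` of `{pⱼ}`, an anonymous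
rule is `P`-robust iff the arithmetic mean of responsiveness strictly exceeds one-half
under every `pⱼ`. -/
theorem stmt_12 (n m : ℕ) (hn : 0 < n) (hm : 0 < m) (φ : (Fin n → Bool) → Bool)
    (hanon : ∀ (x : Fin n → Bool) (π : Equiv.Perm (Fin n)), φ (fun i => x (π i)) = φ x)
    (ps : Fin m → (Fin n → Bool) → ℝ) (hps : ∀ j, IsProb (ps j))
    (hPinv : ∀ p ∈ hullOf ps, ∀ π : Equiv.Perm (Fin n),
        (fun x => p (fun j => x (π j))) ∈ hullOf ps) :
    (∀ p ∈ hullOf ps, ∃ i, (1 : ℝ) / 2 < resp φ p i) ↔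
    (∀ j, (1 : ℝ) / 2 < (∑ i, resp φ (ps j) i) / n) := by
  haveI : NeZero n := ⟨hn.ne'⟩
  have hnR : (0 : ℝ) < (n : ℝ) := by exact_mod_cast hn
  constructor
  · -- forward: robustness ⇒ mean responsiveness > 1/2 under each pⱼ
    intro h j
    -- symmetrize pⱼ over the n cyclic shifts
    set f : Fin n → (Fin n → Bool) → ℝ :=
      fun c => fun x => ps j (fun k => x (Equiv.addRight c k)) with hf
    have hmemc : ∀ c : Fin n, f c ∈ hullOf ps := fun c =>
      hPinv (ps j) (mem_hull ps j) (Equiv.addRight c)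
    choose lam hlam0 hlam1 hlamEq using hmemc
    set q : (Fin n → Bool) → ℝ := fun x => ∑ c, (n : ℝ)⁻¹ * f c x with hq
    have hqmem : q ∈ hullOf ps := by
      refine ⟨fun t => (n : ℝ)⁻¹ * ∑ c, lam c t, fun t => ?_, ?_, ?_⟩
      · have : 0 ≤ ∑ c, lam c t := Finset.sum_nonneg fun c _ => hlam0 c t
        positivity
      · rw [← Finset.mul_sum, Finset.sum_comm]
        simp only [hlam1]
        rw [Finset.sum_const, Finset.card_univ, Fintype.card_fin]
        simp [inv_mul_cancel₀ hnR.ne']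
      · funext x
        have hfc : ∀ c, f c x = ∑ t, lam c t * ps t x := by
          intro c
          have := hlamEq c
          exact congrFun this x
        rw [hq]
        simp only [hfc, Finset.mul_sum]
        rw [Finset.sum_comm]
        refine Finset.sum_congr rfl fun t _ => ?_
        rw [Finset.sum_mul]
        exact Finset.sum_congr rfl fun c _ => by ring
    obtain ⟨i, hi⟩ := h q hqmem
    have hcalc : resp φ q i = (n : ℝ)⁻¹ * ∑ k, resp φ (ps j) k := by
      rw [hq, resp_lin φ (fun _ => (n : ℝ)⁻¹) f i, ← Finset.mul_sum]
      congr 1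
      have hrc : ∀ c : Fin n, resp φ (f c) i = resp φ (ps j) (i - c) := by
        intro c
        have h1 := resp_perm φ hanon (ps j) (Equiv.addRight c) i
        have h2 : (Equiv.addRight c)⁻¹ i = i - c := by
          simp [Equiv.Perm.inv_def, sub_eq_add_neg]
        rw [hf, ← h2]
        exact h1
      simp only [hrc]
      exact Fintype.sum_equiv (Equiv.subLeft i) _ _ fun c => rfl
    rw [hcalc] at hi
    have hdg : (∑ k, resp φ (ps j) k) / (n : ℝ) = (n : ℝ)⁻¹ * ∑ k, resp φ (ps j) k :=
      div_eq_inv_mul _ _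
    rw [hdg]
    exact hi
  · -- backward: mean responsiveness > 1/2 under each pⱼ ⇒ robustness
    intro h p hp
    obtain ⟨lam, hlam0, hlam1, rfl⟩ := hp
    by_contra hcon
    push_neg at hcon
    have hsum_le : ∑ i, resp φ (fun x => ∑ t, lam t * ps t x) i ≤ (n : ℝ) * (1 / 2) := by
      calc ∑ i, resp φ (fun x => ∑ t, lam t * ps t x) i
          ≤ ∑ _i : Fin n, (1 : ℝ) / 2 := Finset.sum_le_sum fun i _ => hcon i
        _ = (n : ℝ) * (1 / 2) := by
            rw [Finset.sum_const, Finset.card_univ, Fintype.card_fin, nsmul_eq_mul]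
    have hsum_eq : ∑ i, resp φ (fun x => ∑ t, lam t * ps t x) i
        = ∑ t, lam t * ∑ i, resp φ (ps t) i := by
      simp only [resp_lin]
      rw [Finset.sum_comm]
      exact Finset.sum_congr rfl fun t _ => by rw [Finset.mul_sum]
    have key : ∀ t, (n : ℝ) * (1 / 2) < ∑ i, resp φ (ps t) i := by
      intro t
      have := h t
      rw [lt_div_iff₀ hnR] at this
      linarith
    obtain ⟨t0, ht0⟩ : ∃ t0, 0 < lam t0 := by
      by_contra hc
      push_neg at hc
      have : ∑ t, lam t ≤ 0 := Finset.sum_nonpos fun t _ => hc t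
      rw [hlam1] at this; linarith
    have hgt : (n : ℝ) * (1 / 2) < ∑ t, lam t * ∑ i, resp φ (ps t) i := by
      have h1 : (n : ℝ) * (1 / 2) = ∑ t, lam t * ((n : ℝ) * (1 / 2)) := by
        rw [← Finset.sum_mul, hlam1, one_mul]
      rw [h1]
      refine Finset.sum_lt_sum (fun t _ => ?_) ⟨t0, Finset.mem_univ t0, ?_⟩
      · exact mul_le_mul_of_nonneg_left (key t).le (hlam0 t)
      · exact mul_lt_mul_of_pos_left (key t0) ht0
    rw [hsum_eq] at hsum_le
    linarith
end

section
/- If n is odd, a deterministic voting rule on {-1,1}^n is both robust and anonymous if and only if it is the simple majority rule (φ(x) = sign(∑ᵢ xᵢ)). If n is even, no deterministic voting rule is both robust and anonymous. -/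
open Finset

def cnt {n : ℕ} (b : Bool) (x : Fin n → Bool) : ℕ :=
  (univ.filter fun i => b = x i).card
lemma cnt_sum {n : ℕ} (b : Bool) (x : Fin n → Bool) :
    ∑ i, (if b = x i then (1:ℝ) else 0) = cnt b x := by
  simp [cnt, Finset.sum_boole]

lemma sg_sum {n : ℕ} (b : Bool) (x : Fin n → Bool) :
    (if b then (1:ℝ) else -1) * ∑ i, sg (x i) = 2 * (cnt b x : ℝ) - n := by
  rw [Finset.mul_sum, ← cnt_sum b x, Finset.mul_sum]
  have h : ∀ i : Fin n, (if b then (1:ℝ) else -1) * sg (x i)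
      = 2 * (if b = x i then (1:ℝ) else 0) - 1 := by
    intro i; cases b <;> cases h : x i <;> simp [sg, h] <;> norm_num
  rw [Finset.sum_congr rfl (fun i _ => h i), Finset.sum_sub_distrib]
  simp [Finset.card_univ]

lemma key1 {n : ℕ} (hn : n ≠ 0) (φ : (Fin n → Bool) → Bool)
    (hr : ∀ p, IsProb p → ∃ i, (1:ℝ)/2 < resp φ p i)
    (ha : ∀ (x : Fin n → Bool) (π : Equiv.Perm (Fin n)), φ (fun i => x (π i)) = φ x)
    (x : Fin n → Bool) : (n : ℝ) < 2 * (cnt (φ x) x : ℝ) := by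
  haveI : NeZero n := ⟨hn⟩
  have hnpos : (0:ℝ) < n := by positivity
  set p : (Fin n → Bool) → ℝ :=
    fun y => (n : ℝ)⁻¹ * ∑ j : Fin n, if (fun i => x (i + j)) = y then 1 else 0 with hp
  have hshift : ∀ j : Fin n, φ (fun i => x (i + j)) = φ x := by
    intro j
    have := ha x (Equiv.addRight j)
    simpa using this
  have hprob : IsProb p := by
    constructor
    · intro y
      apply mul_nonneg (by positivity)
      apply Finset.sum_nonneg
      intro j _
      split <;> norm_num
    · rw [← Finset.mul_sum, Finset.sum_comm]
      have : ∀ j : Fin n, ∑ y : Fin n → Bool,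
          (if (fun i => x (i + j)) = y then (1:ℝ) else 0) = 1 := by
        intro j
        rw [Finset.sum_ite_eq]
        simp
      rw [Finset.sum_congr rfl (fun j _ => this j)]
      simp [Finset.card_univ]
  have hresp : ∀ i, resp φ p i = (n:ℝ)⁻¹ * (cnt (φ x) x) := by
    intro i
    unfold resp
    have h1 : ∀ y : Fin n → Bool, (if φ y = y i then p y else 0)
        = (n:ℝ)⁻¹ * ∑ j : Fin n, if (fun k => x (k + j)) = y then (if φ y = y i then (1:ℝ) else 0) else 0 := by
      intro y
      rw [hp]
      split
      · simp only [Finset.mul_sum]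
      · rw [Finset.mul_sum]
        symm
        apply Finset.sum_eq_zero
        intro j _
        split <;> simp_all
    rw [Finset.sum_congr rfl (fun y _ => h1 y), ← Finset.mul_sum, Finset.sum_comm]
    congr 1
    have h2 : ∀ j : Fin n, (∑ y : Fin n → Bool,
        if (fun k => x (k + j)) = y then (if φ y = y i then (1:ℝ) else 0) else 0)
        = if φ x = x (i + j) then (1:ℝ) else 0 := by
      intro j
      rw [Finset.sum_ite_eq]
      simp [hshift j]
    rw [Finset.sum_congr rfl (fun j _ => h2 j)]
    rw [← cnt_sum (φ x) x]
    exact Equiv.sum_comp (Equiv.addLeft i) (fun m => if φ x = x m then (1:ℝ) else 0)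
  obtain ⟨i, hi⟩ := hr p hprob
  rw [hresp i] at hi
  have h2 : (n:ℝ) * 1 < n * ((n:ℝ)⁻¹ * (cnt (φ x) x) * 2) := by
    apply (mul_lt_mul_iff_right₀ hnpos).mpr
    linarith
  rw [mul_one, ← mul_assoc, ← mul_assoc, mul_inv_cancel₀ (ne_of_gt hnpos), one_mul] at h2
  linarith

/-- if `n` is odd, a rule is robust and anonymous iff it is the simple
majority rule; if `n` is even, no rule is both robust and anonymous. -/
theorem stmt_13 (n : ℕ) (φ : (Fin n → Bool) → Bool) :
    (Odd n →
      (((∀ p, IsProb p → ∃ i, (1 : ℝ) / 2 < resp φ p i) ∧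
        (∀ (x : Fin n → Bool) (π : Equiv.Perm (Fin n)), φ (fun i => x (π i)) = φ x)) ↔
       (∀ x, φ x = true ↔ 0 < ∑ i, sg (x i)))) ∧
    (Even n →
      ¬((∀ p, IsProb p → ∃ i, (1 : ℝ) / 2 < resp φ p i) ∧
        (∀ (x : Fin n → Bool) (π : Equiv.Perm (Fin n)), φ (fun i => x (π i)) = φ x))) := by
  constructor
  · intro hodd
    have hn : n ≠ 0 := by rintro rfl; simp [Nat.odd_iff] at hodd
    constructor
    · rintro ⟨hr, ha⟩ x
      have hk := key1 hn φ hr ha x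
      have hs := sg_sum (φ x) x
      cases hφ : φ x
      · rw [hφ] at hs hk
        simp only [Bool.false_eq_true, false_iff, not_lt]
        norm_num at hs
        linarith
      · rw [hφ] at hs hk
        norm_num at hs
        simp only [true_iff]
        linarith
    · intro hm
      have hcnt : ∀ x, (n : ℝ) + 1 ≤ 2 * (cnt (φ x) x : ℝ) := by
        intro x
        have hs := sg_sum (φ x) x
        have hgoal : n + 1 ≤ 2 * cnt (φ x) x := by
          have hne : n ≠ 2 * cnt (φ x) x := by
            intro h
            rw [h] at hodd
            exact (Nat.not_odd_iff_even.mpr ⟨cnt (φ x) x, by ring⟩) hodd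
          have hle : (n : ℝ) ≤ 2 * (cnt (φ x) x : ℝ) := by
            cases hφ : φ x
            · rw [hφ] at hs
              norm_num at hs
              have h1 : ¬ (0 < ∑ i, sg (x i)) := by
                intro h; have := (hm x).mpr h; rw [hφ] at this; simp at this
              push_neg at h1
              linarith
            · rw [hφ] at hs
              norm_num at hs
              have h1 : 0 < ∑ i, sg (x i) := (hm x).mp hφ
              linarith
          have hleN : n ≤ 2 * cnt (φ x) x := by exact_mod_cast (by push_cast; linarith : (n:ℝ) ≤ ((2 * cnt (φ x) x : ℕ) : ℝ))
          omega
        calc (n : ℝ) + 1 = ((n + 1 : ℕ) : ℝ) := by push_cast; ring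
        _ ≤ ((2 * cnt (φ x) x : ℕ) : ℝ) := by exact_mod_cast hgoal
        _ = 2 * (cnt (φ x) x : ℝ) := by push_cast; ring
      constructor
      · intro p hp
        by_contra hc
        push_neg at hc
        have hsum : ∑ i, resp φ p i = ∑ x : Fin n → Bool, (cnt (φ x) x : ℝ) * p x := by
          unfold resp
          rw [Finset.sum_comm]
          apply Finset.sum_congr rfl
          intro x _
          rw [← cnt_sum (φ x) x, Finset.sum_mul]
          apply Finset.sum_congr rfl
          intro i _
          split <;> simp
        have hlow : ((n:ℝ)+1)/2 ≤ ∑ x : Fin n → Bool, (cnt (φ x) x : ℝ) * p x := by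
          calc ((n:ℝ)+1)/2 = ∑ x : Fin n → Bool, ((n:ℝ)+1)/2 * p x := by
                rw [← Finset.mul_sum, hp.2, mul_one]
          _ ≤ _ := by
                apply Finset.sum_le_sum
                intro x _
                apply mul_le_mul_of_nonneg_right _ (hp.1 x)
                linarith [hcnt x]
        have hhigh : ∑ i, resp φ p i ≤ (n : ℝ) * (1/2) := by
          calc ∑ i, resp φ p i ≤ ∑ _i : Fin n, (1:ℝ)/2 :=
                Finset.sum_le_sum (fun i _ => hc i)
          _ = (n : ℝ) * (1/2) := by simp [Finset.card_univ]
        rw [hsum] at hhigh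
        linarith
      · intro x π
        have hsum : ∑ i, sg (x (π i)) = ∑ i, sg (x i) :=
          Equiv.sum_comp π (fun i => sg (x i))
        apply Bool.eq_iff_iff.mpr
        rw [hm, hm]
        rw [hsum]
  · intro heven
    rintro ⟨hr, ha⟩
    rcases Nat.eq_zero_or_pos n with h0 | hpos
    · subst h0
      obtain ⟨i, -⟩ := hr (fun _ => 1) ⟨fun _ => by norm_num, by simp⟩
      exact i.elim0
    · obtain ⟨m, hnm⟩ := heven
      set x : Fin n → Bool := fun i => decide (i.val < m) with hx
      have hz : ∑ i, sg (x i) = 0 := by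
        rw [hx]
        have : ∑ i : Fin n, sg (decide (i.val < m))
            = ∑ i ∈ Finset.range n, sg (decide (i < m)) :=
          Fin.sum_univ_eq_sum_range (fun k => sg (decide (k < m))) n
        rw [this, hnm, Finset.sum_range_add]
        have h1 : ∑ i ∈ Finset.range m, sg (decide (i < m)) = m := by
          have e : ∀ i ∈ Finset.range m, sg (decide (i < m)) = 1 := by
            intro i hi
            rw [Finset.mem_range] at hi
            simp [sg, hi]
          rw [Finset.sum_congr rfl e]
          simp
        have h2 : ∑ i ∈ Finset.range m, sg (decide (m + i < m)) = -(m:ℝ) := by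
          have e : ∀ i ∈ Finset.range m, sg (decide (m + i < m)) = -1 := by
            intro i hi
            simp [sg]
          rw [Finset.sum_congr rfl e]
          simp
        rw [h1, h2]; ring
      have hk := key1 (Nat.pos_iff_ne_zero.mp hpos) φ hr ha x
      have hs := sg_sum (φ x) x
      rw [hz, mul_zero] at hs
      linarith
end

section
/- If n is even, no anonymous random voting rule φ̄ : {-1,1}^n → [-1,1] is robust: there exists a probability distribution p (uniform on profiles with exactly n/2 ones) under which E_p[φ̄(x)·xᵢ] = 0 for every individual i. -/
open Finset

/-- The uniform distribution on profiles with exactly `n/2` ones. -/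
noncomputable def unifHalf (n : ℕ) : (Fin n → Bool) → ℝ := fun x =>
  if (Finset.univ.filter (fun i => x i = true)).card = n / 2 then
    ((n.choose (n / 2) : ℝ))⁻¹ else 0


/-! Negating every vote maps the profiles with exactly `n/2` ones onto themselves (this is where
`n` even enters), and any two such profiles differ by a permutation of the voters, so an
anonymous rule takes the same value on a profile and on its negation. Hence the weight
`unifHalf n x * φ̄ x` is invariant under negation while `xᵢ` changes sign, and the expectation
`E_p[φ̄(x) xᵢ]` equals its own negative. -/

theorem sg_not (b : Bool) : sg (!b) = -sg b := by
  cases b <;> simp [sg]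

section BoolProfile

variable {ι : Type*} [Fintype ι] [DecidableEq ι]

omit [DecidableEq ι] in
theorem card_filter_not_add_card_filter (x : ι → Bool) :
    #{i | (!x i) = true} + #{i | x i = true} = Fintype.card ι := by
  have hsplit := card_filter_add_card_filter_not (s := univ) fun i => x i = true
  simp only [Bool.not_eq_true, card_univ, Bool.not_eq_eq_eq_not, Bool.not_true] at hsplit ⊢
  omega

omit [DecidableEq ι] in
theorem exists_perm_comp_eq_of_card_filter_eq {x y : ι → Bool}
    (h : #{i | x i = true} = #{i | y i = true}) :
    ∃ π : Equiv.Perm ι, (fun i => x (π i)) = y := by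
  have hcard : Fintype.card {i // y i = true} = Fintype.card {i // x i = true} := by
    simpa only [Fintype.card_subtype] using h.symm
  have hcard_compl : Fintype.card {i // ¬y i = true} = Fintype.card {i // ¬x i = true} := by
    rw [Fintype.card_subtype_compl, Fintype.card_subtype_compl, hcard]
  refine ⟨Equiv.subtypeCongr (Fintype.equivOfCardEq hcard)
    (Fintype.equivOfCardEq hcard_compl), funext fun i => ?_⟩
  by_cases hy : y i = true
  · simpa [Equiv.subtypeCongr, hy] using (Fintype.equivOfCardEq hcard ⟨i, hy⟩).2
  · simpa [Equiv.subtypeCongr, hy] using (Fintype.equivOfCardEq hcard_compl ⟨i, hy⟩).2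

omit [DecidableEq ι] in
theorem eq_of_card_filter_eq_of_anonymous {α : Type*} {φ : (ι → Bool) → α}
    (hφ : ∀ (x : ι → Bool) (π : Equiv.Perm ι), φ (fun i => x (π i)) = φ x)
    {x y : ι → Bool} (h : #{i | x i = true} = #{i | y i = true}) : φ x = φ y := by
  obtain ⟨π, rfl⟩ := exists_perm_comp_eq_of_card_filter_eq h
  exact (hφ x π).symm

theorem card_filter_card_filter_eq_choose (k : ℕ) :
    #{x : ι → Bool | #{i | x i = true} = k} = (Fintype.card ι).choose k := by
  rw [← card_univ, ← card_powersetCard]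
  exact card_nbij' (fun x => ({i | x i = true} : Finset ι)) (fun s i => decide (i ∈ s))
    (fun x hx => by simpa using hx) (fun s hs => by simpa using hs)
    (fun x _ => funext fun i => by simp) (fun s _ => by ext; simp)

theorem sum_mul_sg_eq_zero_of_comp_not {w : (ι → Bool) → ℝ}
    (hw : ∀ x, w (fun i => !x i) = w x) (i : ι) : ∑ x, w x * sg (x i) = 0 := by
  have hinvol : Function.Involutive fun (x : ι → Bool) i => !x i := fun x => by simp
  have hsum := Equiv.sum_comp (hinvol.toPerm _) fun x => w x * sg (x i)
  simp only [Function.Involutive.coe_toPerm, hw, sg_not, mul_neg, sum_neg_distrib] at hsum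
  linarith

end BoolProfile

theorem isProb_unifHalf (n : ℕ) : IsProb (unifHalf n) := by
  have hchoose : (0 : ℝ) < n.choose (n / 2) := by
    exact_mod_cast Nat.choose_pos (Nat.div_le_self n 2)
  refine ⟨fun x => ?_, ?_⟩
  · unfold unifHalf
    split_ifs <;> positivity
  · simp only [unifHalf, sum_ite, sum_const, nsmul_eq_mul, mul_zero, add_zero]
    rw [card_filter_card_filter_eq_choose, Fintype.card_fin]
    field_simp

theorem unifHalf_mul_comp_not {n : ℕ} (hn : Even n) {φ : (Fin n → Bool) → ℝ}
    (hφ : ∀ (x : Fin n → Bool) (π : Equiv.Perm (Fin n)), φ (fun i => x (π i)) = φ x)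
    (x : Fin n → Bool) :
    unifHalf n (fun i => !x i) * φ (fun i => !x i) = unifHalf n x * φ x := by
  obtain ⟨m, rfl⟩ := hn
  have hcard := card_filter_not_add_card_filter x
  rw [Fintype.card_fin] at hcard
  by_cases hx : #{i | x i = true} = (m + m) / 2
  · have hx' : #{i | (!x i) = true} = (m + m) / 2 := by omega
    rw [eq_of_card_filter_eq_of_anonymous hφ (hx'.trans hx.symm)]
    simp only [unifHalf, hx, hx', if_true]
  · have hx' : #{i | (!x i) = true} ≠ (m + m) / 2 := by omega
    simp only [unifHalf, hx, hx', if_false, zero_mul]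

theorem stmt_17_general (n : ℕ) (hn : Even n) (φb : (Fin n → Bool) → ℝ)
    (hanon : ∀ (x : Fin n → Bool) (π : Equiv.Perm (Fin n)), φb (fun i => x (π i)) = φb x) :
    IsProb (unifHalf n) ∧
    (∀ i, (∑ x : Fin n → Bool, unifHalf n x * (φb x * sg (x i))) = 0) ∧
    ¬(∀ p, IsProb p → ∃ i, 0 < ∑ x : Fin n → Bool, p x * (φb x * sg (x i))) := by
  have hzero : ∀ i, ∑ x : Fin n → Bool, unifHalf n x * (φb x * sg (x i)) = 0 := fun i => by
    simp only [← mul_assoc]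
    exact sum_mul_sg_eq_zero_of_comp_not (unifHalf_mul_comp_not hn hanon) i
  refine ⟨isProb_unifHalf n, hzero, fun hrobust => ?_⟩
  obtain ⟨i, hi⟩ := hrobust _ (isProb_unifHalf n)
  exact hi.ne' (hzero i)

/-- if `n` is even, no anonymous random voting rule is robust: under the
uniform distribution on profiles with exactly `n/2` ones, every individual's
`E_p[φ̄(x)xᵢ]` is zero. -/
theorem stmt_17 (n : ℕ) (hn : Even n) (φb : (Fin n → Bool) → ℝ)
    (hb : ∀ x, φb x ∈ Set.Icc (-1 : ℝ) 1)
    (hanon : ∀ (x : Fin n → Bool) (π : Equiv.Perm (Fin n)), φb (fun i => x (π i)) = φb x) :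
    IsProb (unifHalf n) ∧
    (∀ i, (∑ x : Fin n → Bool, unifHalf n x * (φb x * sg (x i))) = 0) ∧
    ¬(∀ p, IsProb p → ∃ i, 0 < ∑ x : Fin n → Bool, p x * (φb x * sg (x i))) :=
  stmt_17_general n hn φb hanon
end

section
/- Fix a full-support probability distribution p° on {-1,1}^n. A deterministic voting rule φ is strictly efficient under p° (no random voting rule φ̄ ≠ φ is weakly Pareto-preferred to φ, i.e., there is no φ̄ with E_{p°}[φ̄(x)xᵢ] ≥ E_{p°}[φ(x)xᵢ] for all i with φ̄ ≠ φ as a rule) if and only if there exists w ∈ ℝ₊^n, w ≠ 0, with φ(x)·∑ᵢ wᵢxᵢ > 0 for all x ∈ {-1,1}^n. -/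
open Finset

/-!
If `φ` has the sign of `w · x` with `w ≥ 0`, then for any random rule `φb` the `w`-weighted sum of
the voters' gains in responsiveness equals `E_p[(φb(x) - φ(x)) (w · x)]`, a sum of terms that are
`≤ 0`, and `< 0` wherever `φb ≠ φ`; so a weak Pareto improvement must be `φ` itself.

Conversely, if no such `w` exists, Ville's theorem of the alternative (separating the convex hull
of the vectors `p(x) φ(x) x` from the nonnegative orthant) yields a probability `q` on profiles with
`∑ₓ q(x) p(x) φ(x) x ≤ 0` coordinatewise, and the random rule `φ(x) (1 - q(x))` is then a weak
Pareto improvement distinct from `φ`.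
-/

/-- Ville's theorem of the alternative. -/
theorem exists_nonneg_forall_dotProduct_pos {ι κ : Type*} [Fintype ι] [Fintype κ]
    [DecidableEq ι] [DecidableEq κ] (v : ι → κ → ℝ)
    (h : ∀ q ∈ stdSimplex ℝ ι, ¬∑ j, q j • v j ≤ 0) :
    ∃ w : κ → ℝ, 0 ≤ w ∧ ∀ j, 0 < w ⬝ᵥ v j := by
  set T : (ι → ℝ) →ₗ[ℝ] κ → ℝ := -Fintype.linearCombination ℝ v
  have hdisj : Disjoint (T '' stdSimplex ℝ ι) (ProperCone.positive ℝ (κ → ℝ)) := by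
    rw [Set.disjoint_left]
    rintro _ ⟨q, hq, rfl⟩ hpos
    refine h q hq ?_
    simpa [T, Fintype.linearCombination_apply] using hpos
  obtain ⟨f, hf_nonneg, hf_neg⟩ := (ProperCone.positive ℝ (κ → ℝ)).hyperplane_separation
    ((convex_stdSimplex ℝ ι).linear_image T)
    ((isCompact_stdSimplex ℝ ι).image T.continuous_of_finiteDimensional) hdisj
  refine ⟨fun k => f (Pi.single k 1), fun k => hf_nonneg _ (by simp [Pi.single_nonneg]),
    fun j => ?_⟩
  have hfT := hf_neg _ ⟨_, single_mem_stdSimplex ℝ j, rfl⟩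
  have hf_eq : f (v j) = (fun k => f (Pi.single k 1)) ⬝ᵥ v j := by
    conv_lhs => rw [← univ_sum_single (v j)]
    simp only [map_sum, dotProduct]
    refine sum_congr rfl fun k _ => ?_
    rw [show Pi.single k (v j k) = v j k • Pi.single k (1 : ℝ) by simp [← Pi.single_smul'],
      map_smul, smul_eq_mul, mul_comm]
  have hTj : T (Pi.single j 1) = -v j := by
    simp [T, Fintype.linearCombination_apply, Pi.single_apply]
  rw [hTj, map_neg, hf_eq] at hfT
  linarith

section Voting

variable {n : ℕ}

lemma sg_ne_zero (b : Bool) : sg b ≠ 0 := by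
  cases b <;> norm_num [sg]

lemma sg_mul_mem_Icc (b : Bool) {t : ℝ} (ht : t ∈ Set.Icc (0 : ℝ) 1) :
    sg b * t ∈ Set.Icc (-1 : ℝ) 1 := by
  obtain ⟨h0, h1⟩ := ht
  cases b <;> simp only [sg, Bool.false_eq_true, if_false, if_true, Set.mem_Icc] <;>
    constructor <;> linarith

lemma sub_sg_mul_neg {b S : ℝ} {c : Bool} (hb : b ∈ Set.Icc (-1 : ℝ) 1) (hS : 0 < sg c * S)
    (hbc : b ≠ sg c) : (b - sg c) * S < 0 := by
  obtain ⟨h0, h1⟩ := hb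
  cases c <;> simp only [sg, Bool.false_eq_true, if_false, if_true] at hS hbc ⊢
  · exact mul_neg_of_pos_of_neg (by linarith [lt_of_le_of_ne h0 (Ne.symm hbc)]) (by linarith)
  · exact mul_neg_of_neg_of_pos (by linarith [lt_of_le_of_ne h1 hbc]) (by linarith)

lemma sub_sg_mul_nonpos {b S : ℝ} {c : Bool} (hb : b ∈ Set.Icc (-1 : ℝ) 1)
    (hS : 0 < sg c * S) : (b - sg c) * S ≤ 0 := by
  rcases eq_or_ne b (sg c) with rfl | hbc
  · simp
  · exact (sub_sg_mul_neg hb hS hbc).le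

/-- `E_p[φb(x) xᵢ]`, that is `2 · (responsiveness of i) - 1`. -/
def voterCorrelation (p φb : (Fin n → Bool) → ℝ) (i : Fin n) : ℝ :=
  ∑ x : Fin n → Bool, p x * (φb x * sg (x i))

def IsStrictlyEfficient (p : (Fin n → Bool) → ℝ) (φ : (Fin n → Bool) → Bool) : Prop :=
  ¬∃ φb : (Fin n → Bool) → ℝ,
    (∀ x, φb x ∈ Set.Icc (-1 : ℝ) 1) ∧ φb ≠ (fun x => sg (φ x)) ∧
    ∀ i, voterCorrelation p (fun x => sg (φ x)) i ≤ voterCorrelation p φb i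

def IsStrictWeightedMajority (φ : (Fin n → Bool) → Bool) : Prop :=
  ∃ w : Fin n → ℝ, (∀ i, 0 ≤ w i) ∧ w ≠ 0 ∧ ∀ x, 0 < sg (φ x) * ∑ i, w i * sg (x i)

def agreement (φ : (Fin n → Bool) → Bool) (x : Fin n → Bool) : Fin n → ℝ :=
  fun i => sg (φ x) * sg (x i)

lemma sg_mul_sum_eq_dotProduct_agreement (φ : (Fin n → Bool) → Bool) (w : Fin n → ℝ)
    (x : Fin n → Bool) : sg (φ x) * ∑ i, w i * sg (x i) = w ⬝ᵥ agreement φ x := by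
  simp only [dotProduct, agreement, mul_sum]
  exact sum_congr rfl fun i _ => by ring

lemma sum_mul_voterCorrelation (p φb : (Fin n → Bool) → ℝ) (w : Fin n → ℝ) :
    ∑ i, w i * voterCorrelation p φb i = ∑ x, p x * φb x * ∑ i, w i * sg (x i) := by
  simp only [voterCorrelation, mul_sum]
  rw [sum_comm]
  exact sum_congr rfl fun x _ => sum_congr rfl fun i _ => by ring

theorem IsStrictWeightedMajority.isStrictlyEfficient {p : (Fin n → Bool) → ℝ}
    {φ : (Fin n → Bool) → Bool} (hφ : IsStrictWeightedMajority φ) (hp : ∀ x, 0 < p x) :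
    IsStrictlyEfficient p φ := by
  rintro ⟨φb, hφb, hne, himp⟩
  obtain ⟨w, hw, -, hwφ⟩ := hφ
  obtain ⟨x₀, hx₀⟩ : ∃ x, φb x ≠ sg (φ x) := Function.ne_iff.1 hne
  have hgain :
      0 ≤ ∑ i, w i * (voterCorrelation p φb i - voterCorrelation p (fun x => sg (φ x)) i) :=
    sum_nonneg fun i _ => mul_nonneg (hw i) (sub_nonneg.2 (himp i))
  have hloss : ∑ x, p x * ((φb x - sg (φ x)) * ∑ i, w i * sg (x i)) < 0 := by
    refine sum_neg' (fun x _ => mul_nonpos_of_nonneg_of_nonpos (hp x).le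
      (sub_sg_mul_nonpos (hφb x) (hwφ x))) ⟨x₀, mem_univ _, ?_⟩
    exact mul_neg_of_pos_of_neg (hp x₀) (sub_sg_mul_neg (hφb x₀) (hwφ x₀) hx₀)
  simp only [mul_sub, sum_sub_distrib, sum_mul_voterCorrelation] at hgain
  simp only [mul_sub, sub_mul, sum_sub_distrib, ← mul_assoc] at hloss
  linarith

lemma exists_paretoImprovement {p : (Fin n → Bool) → ℝ} {φ : (Fin n → Bool) → Bool}
    {q : (Fin n → Bool) → ℝ} (hq : q ∈ stdSimplex ℝ (Fin n → Bool))
    (hqφ : ∑ x, q x • p x • agreement φ x ≤ 0) :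
    ∃ φb : (Fin n → Bool) → ℝ,
      (∀ x, φb x ∈ Set.Icc (-1 : ℝ) 1) ∧ φb ≠ (fun x => sg (φ x)) ∧
      ∀ i, voterCorrelation p (fun x => sg (φ x)) i ≤ voterCorrelation p φb i := by
  obtain ⟨hq0, hq1⟩ := hq
  refine ⟨fun x => sg (φ x) * (1 - q x), fun x => sg_mul_mem_Icc _ ⟨?_, ?_⟩, ?_, fun i => ?_⟩
  · linarith [single_le_sum (fun y _ => hq0 y) (mem_univ x) (f := q)]
  · linarith [hq0 x]
  · obtain ⟨x₀, -, hx₀⟩ := exists_ne_zero_of_sum_ne_zero (s := univ) (f := q) (by simp [hq1])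
    intro h
    have h1 : 1 - q x₀ = 1 := (mul_eq_left₀ (sg_ne_zero _)).1 (congrFun h x₀)
    exact hx₀ (by linarith)
  · have hi : ∑ x, q x * (p x * agreement φ x i) ≤ 0 := by simpa using hqφ i
    have : voterCorrelation p (fun x => sg (φ x) * (1 - q x)) i
        = voterCorrelation p (fun x => sg (φ x)) i - ∑ x, q x * (p x * agreement φ x i) := by
      simp only [voterCorrelation, agreement, ← sum_sub_distrib]
      exact sum_congr rfl fun x _ => by ring
    linarith

theorem IsStrictlyEfficient.isStrictWeightedMajority {p : (Fin n → Bool) → ℝ}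
    {φ : (Fin n → Bool) → Bool} (hφ : IsStrictlyEfficient p φ) (hp : ∀ x, 0 < p x) :
    IsStrictWeightedMajority φ := by
  obtain ⟨w, hw, hpos⟩ := exists_nonneg_forall_dotProduct_pos (fun x => p x • agreement φ x)
    fun q hq hqφ => hφ (exists_paretoImprovement hq hqφ)
  have hagree (x : Fin n → Bool) : 0 < w ⬝ᵥ agreement φ x := by
    have := hpos x
    rw [dotProduct_smul, smul_eq_mul] at this
    exact pos_of_mul_pos_right this (hp x).le
  refine ⟨w, hw, ?_, fun x => (sg_mul_sum_eq_dotProduct_agreement φ w x).symm ▸ hagree x⟩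
  rintro rfl
  simpa using hagree fun _ => true

end Voting

theorem stmt_19_general (n : ℕ) (φ : (Fin n → Bool) → Bool) (p : (Fin n → Bool) → ℝ)
    (hfull : ∀ x, 0 < p x) :
    (¬∃ φb : (Fin n → Bool) → ℝ,
        (∀ x, φb x ∈ Set.Icc (-1 : ℝ) 1) ∧ φb ≠ (fun x => sg (φ x)) ∧
        ∀ i, (∑ x : Fin n → Bool, p x * (sg (φ x) * sg (x i))) ≤
             ∑ x : Fin n → Bool, p x * (φb x * sg (x i))) ↔
    (∃ w : Fin n → ℝ, (∀ i, 0 ≤ w i) ∧ w ≠ 0 ∧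
        ∀ x, 0 < sg (φ x) * ∑ i, w i * sg (x i)) :=
  ⟨fun h => IsStrictlyEfficient.isStrictWeightedMajority h hfull,
    fun h => IsStrictWeightedMajority.isStrictlyEfficient h hfull⟩

/-- for a full-support `p°`, a deterministic rule `φ` is strictly efficient
under `p°` (no random rule distinct from `φ` is weakly Pareto-preferred to it) iff `φ` is
a WMR with nonnegative weights and no ties. -/
theorem stmt_19 (n : ℕ) (φ : (Fin n → Bool) → Bool) (p : (Fin n → Bool) → ℝ)
    (hp : IsProb p) (hfull : ∀ x, 0 < p x) :
    (¬∃ φb : (Fin n → Bool) → ℝ,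
        (∀ x, φb x ∈ Set.Icc (-1 : ℝ) 1) ∧ φb ≠ (fun x => sg (φ x)) ∧
        ∀ i, (∑ x : Fin n → Bool, p x * (sg (φ x) * sg (x i))) ≤
             ∑ x : Fin n → Bool, p x * (φb x * sg (x i))) ↔
    (∃ w : Fin n → ℝ, (∀ i, 0 ≤ w i) ∧ w ≠ 0 ∧
        ∀ x, 0 < sg (φ x) * ∑ i, w i * sg (x i)) :=
  stmt_19_general n φ p hfull
end
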